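/- arXiv:2307.09414 — 3 statements merged into one kernel-verified Lean document; each statement's English description precedes it below -/
import Mathlib

section
/- Let F = ℚ(x,y) be the rational function field in two variables and let G = Fˣ be its multiplicative group, written additively via ⋀²(G) over ℤ. With f₃ = x/y, f₄ = x(1−y)/(y(1−x)), f₆ = (1−y)/(1−x), f₈ = x, f₉ = y, the following identity holds in ⋀²(Fˣ): f₄∧(1−f₄) − f₉∧(1−f₉) + f₈∧(1−f₈) − f₃∧(1−f₃) − f₆∧(1−f₆) = 0. -/
/-!
With `a = x`, `b = y`, `c = 1 - x`, `d = 1 - y`, `e = y - x`, every function in the relation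
factors multiplicatively over these five:
`f₃ = a/b`, `1 - f₃ = e/b`, `f₄ = ad/(bc)`, `1 - f₄ = e/(bc)`, `f₆ = d/c`, `1 - f₆ = e/c`,
`f₈ = a`, `1 - f₈ = c`, `f₉ = b`, `1 - f₉ = d`.
Expanding bilinearly, the relation becomes an identity in `⋀²` of an arbitrary abelian group
in the five letters `a, b, c, d, e`, which follows from antisymmetry alone.
-/

/-- The rational function field `ℚ(x,y)` in two variables. -/
noncomputable abbrev SK.F : Type := FractionRing (MvPolynomial (Fin 2) ℚ)

noncomputable def SK.x : SK.F := algebraMap (MvPolynomial (Fin 2) ℚ) SK.F (MvPolynomial.X 0)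
noncomputable def SK.y : SK.F := algebraMap (MvPolynomial (Fin 2) ℚ) SK.F (MvPolynomial.X 1)

namespace ExteriorAlgebra

variable {R M : Type*} [CommRing R] [AddCommGroup M] [Module R M]

theorem ι_mul_ι_swap (m n : M) : ι R n * ι R m = -(ι R m * ι R n) :=
  eq_neg_of_add_eq_zero_left ((add_comm _ _).trans (ι_add_mul_swap m n))

theorem ι_mul_ι_five_term (a b c d e : M) :
    ι R (a + d - b - c) * ι R (e - b - c) - ι R b * ι R d + ι R a * ι R c
      - ι R (a - b) * ι R (e - b) - ι R (d - c) * ι R (e - c) = 0 := by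
  simp only [map_add, map_sub, add_mul, sub_mul, mul_sub, ι_sq_zero,
    ι_mul_ι_swap d b, ι_mul_ι_swap c d, ι_mul_ι_swap b c]
  abel

end ExteriorAlgebra

open SK ExteriorAlgebra in
/-- Zagier's tensor criterion for Schaeffer's five-term dilogarithm equation:
`f₄∧(1−f₄) − f₉∧(1−f₉) + f₈∧(1−f₈) − f₃∧(1−f₃) − f₆∧(1−f₆) = 0` in `⋀²(Fˣ)`,
realized as degree-2 elements of the exterior algebra over `ℤ` of the
multiplicative group `Fˣ` written additively. -/
theorem spence_kummer_stmt8
    (u₃ u₄ u₆ u₈ u₉ w₃ w₄ w₆ w₈ w₉ : SK.Fˣ)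
    (hu₃ : (u₃ : SK.F) = x / y)
    (hu₄ : (u₄ : SK.F) = x * (1 - y) / (y * (1 - x)))
    (hu₆ : (u₆ : SK.F) = (1 - y) / (1 - x))
    (hu₈ : (u₈ : SK.F) = x)
    (hu₉ : (u₉ : SK.F) = y)
    (hw₃ : (w₃ : SK.F) = 1 - x / y)
    (hw₄ : (w₄ : SK.F) = 1 - x * (1 - y) / (y * (1 - x)))
    (hw₆ : (w₆ : SK.F) = 1 - (1 - y) / (1 - x))
    (hw₈ : (w₈ : SK.F) = 1 - x)
    (hw₉ : (w₉ : SK.F) = 1 - y) :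
    ι ℤ (Additive.ofMul u₄) * ι ℤ (Additive.ofMul w₄)
      - ι ℤ (Additive.ofMul u₉) * ι ℤ (Additive.ofMul w₉)
      + ι ℤ (Additive.ofMul u₈) * ι ℤ (Additive.ofMul w₈)
      - ι ℤ (Additive.ofMul u₃) * ι ℤ (Additive.ofMul w₃)
      - ι ℤ (Additive.ofMul u₆) * ι ℤ (Additive.ofMul w₆)
      = (0 : ExteriorAlgebra ℤ (Additive SK.Fˣ)) := by
  have hy : y ≠ 0 := hu₉ ▸ u₉.ne_zero
  have hx : 1 - x ≠ 0 := hw₈ ▸ w₈.ne_zero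
  obtain ⟨e, he⟩ : ∃ e : SK.Fˣ, (e : SK.F) = y - x :=
    ⟨w₃ * u₉, by rw [Units.val_mul, hw₃, hu₉]; field_simp⟩
  obtain rfl : u₃ = u₈ / u₉ := Units.ext <| by
    rw [Units.val_div_eq_div_val, hu₃, hu₈, hu₉]
  obtain rfl : u₄ = u₈ * w₉ / u₉ / w₈ := Units.ext <| by
    simp only [Units.val_div_eq_div_val, Units.val_mul, hu₄, hu₈, hu₉, hw₈, hw₉]; field_simp
  obtain rfl : u₆ = w₉ / w₈ := Units.ext <| by
    rw [Units.val_div_eq_div_val, hu₆, hw₈, hw₉]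
  obtain rfl : w₃ = e / u₉ := Units.ext <| by
    rw [Units.val_div_eq_div_val, hw₃, he, hu₉]; field_simp
  obtain rfl : w₄ = e / u₉ / w₈ := Units.ext <| by
    simp only [Units.val_div_eq_div_val, hw₄, he, hu₉, hw₈]; field_simp; ring
  obtain rfl : w₆ = e / w₈ := Units.ext <| by
    rw [Units.val_div_eq_div_val, hw₆, he, hw₈]; field_simp; ring
  simp only [ofMul_div, ofMul_mul]
  exact ι_mul_ι_five_term _ _ _ _ _
end

section
/- With the vectors vᵢ, wᵢ ∈ ℤ⁶ defined by: v₁ = (1,−1,0,−2,2,0), w₁ = (0,−1,1,−2,0,1); v₂ = (1,1,0,0,0,0), w₂ = (0,0,0,0,0,1); v₃ = (1,−1,0,0,0,0), w₃ = (0,−1,1,0,0,0); v₄ = (1,−1,0,−1,1,0), w₄ = (0,−1,1,−1,0,0); v₅ = (1,0,0,−1,1,0), w₅ = (0,0,0,−1,0,1); v₆ = (0,0,0,−1,1,0), w₆ = (0,0,1,−1,0,0); v₇ = (0,−1,0,−1,1,0), w₇ = (0,−1,0,−1,0,1); v₈ = (1,0,0,0,0,0), w₈ = (0,0,0,1,0,0);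 v₉ = (0,1,0,0,0,0), w₉ = (0,0,0,0,1,0), and coefficients (d₁,…,d₉) = (1,1,1,−2,−2,−2,−2,−2,−2), one has Σᵢ dᵢ · vᵢ ⊗ (vᵢ ∧ wᵢ) = 0 in ℤ⁶ ⊗_ℤ ⋀²(ℤ⁶). -/
/-!
Writing `vₙ ∧ wₙ` in a basis `(eⱼ)`, the element becomes `∑ⱼ ∑ₖ xⱼₖ ⊗ (eⱼ ∧ eₖ)` with
`xⱼₖ = ∑ₙ dₙ vₙⱼ wₙₖ • vₙ`. Since `eⱼ ∧ eₖ = -(eₖ ∧ eⱼ)` and `eⱼ ∧ eⱼ = 0`, such a sum vanishes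
as soon as `xⱼₖ` is symmetric in `j, k`, and for the Spence–Kummer data this symmetry is a finite
check.
-/

def SKv : Fin 9 → (Fin 6 → ℤ)
  | 0 => ![1, -1, 0, -2, 2, 0]
  | 1 => ![1, 1, 0, 0, 0, 0]
  | 2 => ![1, -1, 0, 0, 0, 0]
  | 3 => ![1, -1, 0, -1, 1, 0]
  | 4 => ![1, 0, 0, -1, 1, 0]
  | 5 => ![0, 0, 0, -1, 1, 0]
  | 6 => ![0, -1, 0, -1, 1, 0]
  | 7 => ![1, 0, 0, 0, 0, 0]
  | 8 => ![0, 1, 0, 0, 0, 0]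

def SKw : Fin 9 → (Fin 6 → ℤ)
  | 0 => ![0, -1, 1, -2, 0, 1]
  | 1 => ![0, 0, 0, 0, 0, 1]
  | 2 => ![0, -1, 1, 0, 0, 0]
  | 3 => ![0, -1, 1, -1, 0, 0]
  | 4 => ![0, 0, 0, -1, 0, 1]
  | 5 => ![0, 0, 1, -1, 0, 0]
  | 6 => ![0, -1, 0, -1, 0, 1]
  | 7 => ![0, 0, 0, 1, 0, 0]
  | 8 => ![0, 0, 0, 0, 1, 0]

def SKd : Fin 9 → ℤ := ![1, 1, 1, -2, -2, -2, -2, -2, -2]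

namespace ExteriorAlgebra

open TensorProduct

variable {R M N η κ : Type*} [CommRing R] [AddCommGroup M] [Module R M]
  [AddCommGroup N] [Module R N] [Fintype η]

theorem sum_tmul_ι_mul_ι_eq_zero_of_symm (x : η → η → N) (e : η → M)
    (hx : ∀ j k, x j k = x k j) :
    ∑ j, ∑ k, x j k ⊗ₜ[R] (ι R (e j) * ι R (e k)) = 0 := by
  rw [← Finset.sum_product' (f := fun j k => x j k ⊗ₜ[R] (ι R (e j) * ι R (e k)))]
  refine Finset.sum_ninvolution Prod.swap ?_ ?_ (fun _ => Finset.mem_univ _) Prod.swap_swap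
  · rintro ⟨j, k⟩
    rw [Prod.swap_prod_mk, hx k j, ← tmul_add, ι_add_mul_swap, tmul_zero]
  · rintro ⟨j, k⟩ hne hswap
    obtain rfl : k = j := (Prod.mk.inj hswap).1
    exact hne (by rw [ι_sq_zero, tmul_zero])

theorem ι_mul_ι_eq_sum (b : Module.Basis η R M) (v w : M) :
    ι R v * ι R w = ∑ j, ∑ k, (b.repr v j * b.repr w k) • (ι R (b j) * ι R (b k)) := by
  conv_lhs => rw [← b.sum_repr v, ← b.sum_repr w]
  simp only [map_sum, map_smul, Finset.sum_mul, Finset.mul_sum, smul_mul_smul_comm]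
  exact Finset.sum_comm

theorem sum_tmul_ι_mul_ι_eq_zero [Fintype κ] (b : Module.Basis η R M) (a : κ → N) (v w : κ → M)
    (hsymm : ∀ j k, ∑ n, (b.repr (v n) j * b.repr (w n) k) • a n =
      ∑ n, (b.repr (v n) k * b.repr (w n) j) • a n) :
    ∑ n, a n ⊗ₜ[R] (ι R (v n) * ι R (w n)) = 0 := by
  have hterm : ∀ n, a n ⊗ₜ[R] (ι R (v n) * ι R (w n)) = ∑ j, ∑ k,
      ((b.repr (v n) j * b.repr (w n) k) • a n) ⊗ₜ[R] (ι R (b j) * ι R (b k)) := fun n => by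
    simp only [ι_mul_ι_eq_sum b (v n), tmul_sum, tmul_smul, smul_tmul']
  simp only [hterm]
  rw [Finset.sum_comm]
  simp only [Finset.sum_comm (γ := κ), ← sum_tmul]
  exact sum_tmul_ι_mul_ι_eq_zero_of_symm _ _ hsymm

end ExteriorAlgebra

open ExteriorAlgebra TensorProduct in
/-- Degree-3 homotopy/tensor criterion for Spence–Kummer's nine-term
trilogarithm functional equation: `Σᵢ dᵢ · vᵢ ⊗ (vᵢ ∧ wᵢ) = 0` in
`ℤ⁶ ⊗_ℤ ⋀²(ℤ⁶)`. -/
theorem spence_kummer_stmt12 :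
    (∑ i : Fin 9, SKd i • (SKv i ⊗ₜ[ℤ] (ι ℤ (SKv i) * ι ℤ (SKw i))))
      = (0 : (Fin 6 → ℤ) ⊗[ℤ] ExteriorAlgebra ℤ (Fin 6 → ℤ)) := by
  simp only [smul_tmul']
  refine sum_tmul_ι_mul_ι_eq_zero (Pi.basisFun ℤ (Fin 6)) _ _ _ ?_
  simp only [Pi.basisFun_repr]
  decide
end

section
/- Define Li₂(z) = Σ_{n=1}^∞ zⁿ/n² for real z with |z| < 1 (extended continuously to z = 1 with Li₂(1) = π²/6). For all real x, y with 0 < x < y < 1, the following five-term identity of Schaeffer holds: Li₂(x(1−y)/(y(1−x))) − Li₂(y) + Li₂(x) − Li₂(x/y) − Li₂((1−y)/(1−x)) = log(y)·log((1−y)/(1−x)) − π²/6. -/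
/-!
Fix `y` and regard both sides as functions of `x ∈ [0, y]`. Since
`d/dx Li₂(f(x)) = -log(1 - f) f' / f`, and `1 - f` factors into `y - x`, `y`, `1 - x` for each of
the four arguments, the derivative of the difference is a combination of `log(y - x)`, `log y`,
`log(1 - x)` whose coefficients all vanish. The difference is therefore constant, and at `x = 0`
the identity is Euler's reflection formula `Li₂(y) + Li₂(1 - y) = π²/6 - log y log(1 - y)`,
itself proved the same way on `[y, 1]`.
-/

/-- The dilogarithm, defined on `[-1,1]` by the convergent power series
`Li₂(z) = Σ_{n ≥ 1} zⁿ/n²` (at `z = 1` this converges to `π²/6`). -/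
noncomputable def Li2 (z : ℝ) : ℝ := ∑' n : ℕ, z ^ (n + 1) / ((n : ℝ) + 1) ^ 2

open Real Set Filter Topology

lemma eq_of_continuousOn_Icc_of_hasDerivAt_zero {f : ℝ → ℝ} {a b : ℝ} (hab : a < b)
    (hf : ContinuousOn f (Icc a b)) (hf' : ∀ t ∈ Ioo a b, HasDerivAt f 0 t) : f b = f a := by
  obtain ⟨c, -, hc⟩ := exists_hasDerivAt_eq_slope f (fun _ ↦ 0) hab hf hf'
  rw [eq_comm, div_eq_zero_iff, sub_eq_zero, sub_eq_zero] at hc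
  exact hc.resolve_right hab.ne'

lemma hasDerivAt_const_div_one_sub (a : ℝ) {t : ℝ} (ht : 1 - t ≠ 0) :
    HasDerivAt (fun u ↦ a / (1 - u)) (a / (1 - t) ^ 2) t :=
  ((hasDerivAt_const t a).div ((hasDerivAt_id' t).const_sub 1) ht).congr_deriv (by ring)

lemma continuousAt_log_mul_log_one_sub_one : ContinuousAt (fun u ↦ log u * log (1 - u)) 1 := by
  have hslope : Tendsto (fun u ↦ log u / (u - 1)) (𝓝[≠] 1) (𝓝 1) := by
    have h := hasDerivAt_iff_tendsto_slope.mp (hasDerivAt_log one_ne_zero)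
    rw [inv_one] at h
    exact h.congr fun u ↦ by rw [slope_def_field, log_one, sub_zero]
  have hmulLog : Tendsto (fun u ↦ -((1 - u) * log (1 - u))) (𝓝 1) (𝓝 0) := by
    have h : Continuous fun u : ℝ ↦ -((1 - u) * log (1 - u)) :=
      (continuous_mul_log.comp (continuous_sub_left 1)).neg
    exact h.tendsto' 1 0 (by simp)
  have hprod : Tendsto (fun u ↦ log u / (u - 1) * -((1 - u) * log (1 - u))) (𝓝[≠] 1) (𝓝 0) := by
    simpa using hslope.mul (hmulLog.mono_left nhdsWithin_le_nhds)
  rw [← continuousWithinAt_compl_self, ContinuousWithinAt, sub_self, log_zero, mul_zero]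
  -- a difference quotient of `log` at `1` times a factor tending to `0`
  refine hprod.congr' ?_
  filter_upwards [self_mem_nhdsWithin] with u hu
  field_simp [sub_ne_zero.mpr hu]
  ring

lemma continuous_log_mul_log_one_sub : Continuous fun u ↦ log u * log (1 - u) := by
  refine continuous_iff_continuousAt.mpr fun t ↦ ?_
  by_cases h1 : t = 1
  · exact h1 ▸ continuousAt_log_mul_log_one_sub_one
  by_cases h0 : t = 0
  · -- the function is invariant under `u ↦ 1 - u`
    have h := continuousAt_log_mul_log_one_sub_one.comp_of_eq
      (continuous_sub_left (1 : ℝ)).continuousAt (sub_zero 1)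
    simpa [Function.comp_def, mul_comm, h0] using h
  exact (continuousAt_log h0).mul
    ((continuousAt_log (sub_ne_zero.mpr (Ne.symm h1))).comp (continuous_sub_left 1).continuousAt)

lemma Li2_zero : Li2 0 = 0 := by
  simp [Li2]

lemma Li2_one : Li2 1 = π ^ 2 / 6 := by
  have h := (hasSum_nat_add_iff' 1).mpr hasSum_zeta_two
  simp only [Finset.range_one, Finset.sum_singleton, Nat.cast_zero, Nat.cast_add,
    Nat.cast_one] at h
  simpa [Li2] using h.tsum_eq

lemma continuousOn_Li2 : ContinuousOn Li2 (Icc (-1) 1) := by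
  refine continuousOn_tsum (fun n ↦ (continuous_pow _).continuousOn.div_const _)
    ((summable_nat_add_iff 1).mpr (Real.summable_one_div_nat_pow.mpr one_lt_two))
    fun n z hz ↦ ?_
  rw [norm_div, norm_pow, norm_pow, Real.norm_eq_abs, Real.norm_of_nonneg n.cast_add_one_pos.le,
    Nat.cast_succ]
  exact div_le_div_of_nonneg_right (pow_le_one₀ (abs_nonneg z) (abs_le.mpr hz)) (by positivity)

lemma ContinuousOn.Li2 {f : ℝ → ℝ} {s : Set ℝ} (hf : ContinuousOn f s)
    (hs : MapsTo f s (Icc (-1) 1)) : ContinuousOn (fun t ↦ Li2 (f t)) s :=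
  continuousOn_Li2.comp hf hs

lemma hasDerivAt_Li2 {z : ℝ} (hz : |z| < 1) (hz0 : z ≠ 0) :
    HasDerivAt Li2 (-log (1 - z) / z) z := by
  obtain ⟨r, hzr, hr1⟩ := exists_between hz
  have hr0 : 0 < r := (abs_nonneg z).trans_lt hzr
  have hseries : HasDerivAt Li2 (∑' n : ℕ, z ^ n / ((n : ℝ) + 1)) z := by
    refine hasDerivAt_tsum_of_isPreconnected (u := fun n : ℕ ↦ r ^ n)
      (g := fun n u ↦ u ^ (n + 1) / ((n : ℝ) + 1) ^ 2) (g' := fun n u ↦ u ^ n / ((n : ℝ) + 1))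
      (summable_geometric_of_lt_one hr0.le hr1) isOpen_Ioo isPreconnected_Ioo
      (fun n u _ ↦ ?_) (fun n u hu ↦ ?_) (y₀ := 0) ⟨neg_lt_zero.mpr hr0, hr0⟩
      (summable_zero.congr (by simp)) (abs_lt.mp hzr)
    · refine ((hasDerivAt_pow (n + 1) u).div_const _).congr_deriv ?_
      rw [Nat.add_sub_cancel]
      push_cast
      field_simp
    · rw [norm_div, norm_pow, Real.norm_eq_abs, Real.norm_of_nonneg n.cast_add_one_pos.le]
      calc |u| ^ n / ((n : ℝ) + 1) ≤ |u| ^ n := div_le_self (by positivity) (by simp)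
        _ ≤ r ^ n := pow_le_pow_left₀ (abs_nonneg u) (abs_lt.mpr hu).le n
  have hsum : HasSum (fun n : ℕ ↦ z ^ n / ((n : ℝ) + 1)) (-log (1 - z) / z) := by
    refine ((hasSum_pow_div_log_of_abs_lt_one hz).div_const z).congr_fun fun n ↦ ?_
    field_simp
    ring
  rwa [hsum.tsum_eq] at hseries

lemma HasDerivAt.Li2 {f : ℝ → ℝ} {f' t : ℝ} (hf : HasDerivAt f f' t) (h : |f t| < 1)
    (h0 : f t ≠ 0) : HasDerivAt (fun u ↦ Li2 (f u)) (-Real.log (1 - f t) / f t * f') t :=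
  (hasDerivAt_Li2 h h0).comp t hf

lemma Li2_add_Li2_one_sub {z : ℝ} (h0 : 0 < z) (h1 : z < 1) :
    Li2 z + Li2 (1 - z) = π ^ 2 / 6 - log z * log (1 - z) := by
  set G : ℝ → ℝ := fun t ↦ Li2 t + Li2 (1 - t) + log t * log (1 - t) with hG
  have hcont : ContinuousOn G (Icc z 1) := by
    refine ((continuousOn_Li2.mono fun t ht ↦ ⟨by linarith [ht.1], ht.2⟩).add
      ((continuous_sub_left 1).continuousOn.Li2 fun t ht ↦ ?_)).add
      continuous_log_mul_log_one_sub.continuousOn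
    exact ⟨by linarith [ht.2], by linarith [ht.1]⟩
  have hderiv : ∀ t ∈ Ioo z 1, HasDerivAt G 0 t := by
    rintro t ⟨hzt, ht1⟩
    have ht0 : 0 < t := h0.trans hzt
    have hsub := (hasDerivAt_id' t).const_sub 1
    have H := ((hasDerivAt_Li2 (abs_lt.mpr ⟨by linarith, ht1⟩) ht0.ne').add
      (hsub.Li2 (abs_lt.mpr ⟨by linarith, by linarith⟩) (by linarith))).add
      ((hasDerivAt_log ht0.ne').mul (hsub.log (by linarith)))
    refine H.congr_deriv ?_
    rw [sub_sub_cancel]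
    field_simp
    ring
  have hG1 : G 1 = π ^ 2 / 6 := by simp [hG, Li2_one, Li2_zero]
  have := (eq_of_continuousOn_Icc_of_hasDerivAt_zero h1 hcont hderiv).symm.trans hG1
  simp only [hG] at this
  linarith

noncomputable def schaefferDefect (y t : ℝ) : ℝ :=
  Li2 (t * (1 - y) / (y * (1 - t))) - Li2 y + Li2 t - Li2 (t / y) - Li2 ((1 - y) / (1 - t))
    - log y * log ((1 - y) / (1 - t)) + π ^ 2 / 6

section schaefferDefect

variable {y : ℝ}

lemma schaefferDefect_zero (hy0 : 0 < y) (hy1 : y < 1) : schaefferDefect y 0 = 0 := by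
  have h := Li2_add_Li2_one_sub hy0 hy1
  simp only [schaefferDefect, zero_mul, zero_div, Li2_zero, sub_zero, div_one]
  linarith

lemma continuousOn_schaefferDefect (hy0 : 0 < y) (hy1 : y < 1) :
    ContinuousOn (schaefferDefect y) (Icc 0 y) := by
  have hsub : ∀ t ∈ Icc 0 y, 0 < 1 - t := fun t ht ↦ by linarith [ht.2]
  have hmaps : ∀ {f : ℝ → ℝ}, (∀ t ∈ Icc 0 y, 0 ≤ f t ∧ f t ≤ 1) →
      MapsTo f (Icc 0 y) (Icc (-1) 1) :=
    fun hf t ht ↦ ⟨by linarith [(hf t ht).1], (hf t ht).2⟩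
  have hφ : ContinuousOn (fun t ↦ t * (1 - y) / (y * (1 - t))) (Icc 0 y) :=
    by fun_prop (disch := exact fun t ht ↦ mul_ne_zero hy0.ne' (hsub t ht).ne')
  have hψ : ContinuousOn (fun t ↦ (1 - y) / (1 - t)) (Icc 0 y) :=
    by fun_prop (disch := exact fun t ht ↦ (hsub t ht).ne')
  have hφ_mem : MapsTo (fun t ↦ t * (1 - y) / (y * (1 - t))) (Icc 0 y) (Icc (-1) 1) :=
    hmaps fun t ht ↦ have hden := mul_pos hy0 (hsub t ht)
      ⟨div_nonneg (mul_nonneg ht.1 (by linarith)) hden.le,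
        div_le_one_of_le₀ (by nlinarith [ht.2]) hden.le⟩
  have hψ_mem : MapsTo (fun t ↦ (1 - y) / (1 - t)) (Icc 0 y) (Icc (-1) 1) :=
    hmaps fun t ht ↦ ⟨div_nonneg (by linarith) (hsub t ht).le,
      div_le_one_of_le₀ (by linarith [ht.2]) (hsub t ht).le⟩
  have hdiv_mem : MapsTo (fun t ↦ t / y) (Icc 0 y) (Icc (-1) 1) :=
    hmaps fun t ht ↦ ⟨div_nonneg ht.1 hy0.le, div_le_one_of_le₀ ht.2 hy0.le⟩
  exact (((((hφ.Li2 hφ_mem).sub continuousOn_const).add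
    (continuousOn_Li2.mono fun t ht ↦ ⟨by linarith [ht.1], ht.2.trans hy1.le⟩)).sub
    ((continuousOn_id.div_const y).Li2 hdiv_mem)).sub (hψ.Li2 hψ_mem)).sub
    (continuousOn_const.mul (hψ.log fun t ht ↦ (div_pos (by linarith) (hsub t ht)).ne'))
    |>.add continuousOn_const

lemma hasDerivAt_schaefferDefect {t : ℝ} (hy1 : y < 1) (ht : t ∈ Ioo 0 y) :
    HasDerivAt (schaefferDefect y) 0 t := by
  obtain ⟨ht0, hty⟩ := ht
  have hy0 : 0 < y := ht0.trans hty
  have h1t : 0 < 1 - t := by linarith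
  have hyt : 0 < y - t := by linarith
  have h1y : 1 - y ≠ 0 := (sub_pos.mpr hy1).ne'
  have hunit : ∀ {v : ℝ}, 0 < v → v < 1 → |v| < 1 := fun h0 h1 ↦ abs_lt.mpr ⟨by linarith, h1⟩
  have hψ := hasDerivAt_const_div_one_sub (1 - y) h1t.ne'
  have hφ : HasDerivAt (fun u ↦ u * (1 - y) / (y * (1 - u))) ((1 - y) / (y * (1 - t) ^ 2)) t :=
    (((hasDerivAt_id' t).mul_const (1 - y)).div (((hasDerivAt_id' t).const_sub 1).const_mul y)
      (by positivity)).congr_deriv (by field_simp; ring)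
  have hLi2φ : HasDerivAt (fun u ↦ Li2 (u * (1 - y) / (y * (1 - u))))
      (-(log (y - t) - log y - log (1 - t)) / (t * (1 - t))) t := by
    refine (hφ.Li2 (hunit (by positivity) ?_) (by positivity)).congr_deriv ?_
    · rw [div_lt_one (by positivity)]
      nlinarith
    · rw [show 1 - t * (1 - y) / (y * (1 - t)) = (y - t) / (y * (1 - t)) by field_simp; ring,
        log_div hyt.ne' (by positivity), log_mul hy0.ne' h1t.ne']
      field_simp
      ring
  have hLi2div : HasDerivAt (fun u ↦ Li2 (u / y)) (-(log (y - t) - log y) / t) t := by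
    refine (((hasDerivAt_id' t).div_const y).Li2
      (hunit (by positivity) ((div_lt_one hy0).mpr hty)) (by positivity)).congr_deriv ?_
    rw [one_sub_div hy0.ne', log_div hyt.ne' hy0.ne']
    field_simp
  have hLi2ψ : HasDerivAt (fun u ↦ Li2 ((1 - y) / (1 - u)))
      (-(log (y - t) - log (1 - t)) / (1 - t)) t := by
    refine (hψ.Li2 (hunit (by positivity) ((div_lt_one h1t).mpr (by linarith)))
      (by positivity)).congr_deriv ?_
    rw [one_sub_div h1t.ne', sub_sub_sub_cancel_left, log_div hyt.ne' h1t.ne']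
    field_simp
  have hlogψ : HasDerivAt (fun u ↦ log ((1 - y) / (1 - u))) (1 / (1 - t)) t :=
    (hψ.log (by positivity)).congr_deriv (by field_simp)
  have hLi2 := hasDerivAt_Li2 (hunit ht0 (by linarith)) ht0.ne'
  refine ((((((hLi2φ.sub_const _).add hLi2).sub hLi2div).sub hLi2ψ).sub (hlogψ.const_mul (log y))).add_const _
    ).congr_deriv ?_
  field_simp
  ring

end schaefferDefect

/-- Schaeffer's five-term functional equation of the dilogarithm, for real
parameters `0 < x < y < 1`. -/
theorem spence_kummer_stmt17 (x y : ℝ) (hx : 0 < x) (hxy : x < y) (hy : y < 1) :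
    Li2 (x * (1 - y) / (y * (1 - x))) - Li2 y + Li2 x - Li2 (x / y)
        - Li2 ((1 - y) / (1 - x))
      = Real.log y * Real.log ((1 - y) / (1 - x)) - Real.pi ^ 2 / 6 := by
  have hy0 : 0 < y := hx.trans hxy
  have h := eq_of_continuousOn_Icc_of_hasDerivAt_zero hx
    ((continuousOn_schaefferDefect hy0 hy).mono (Icc_subset_Icc_right hxy.le))
    fun t ht ↦ hasDerivAt_schaefferDefect hy (Ioo_subset_Ioo_right hxy.le ht)
  rw [schaefferDefect_zero hy0 hy, schaefferDefect] at h
  linarith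
end
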